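/- arXiv:2602.08258 — 5 statements merged into one kernel-verified Lean document; each statement's English description precedes it below -/
import Mathlib

section
/- Let R be a one-dimensional Cohen-Macaulay local ring, I an m-primary ideal, M a finitely generated torsion-free R-module, and (x) a minimal reduction of I. Then M is I-Ulrich (i.e., e_R(I,M) = length_R(M/IM)) if and only if IM = xM. -/
open IsLocalRing Filter

section Defs

variable (R : Type*) [CommRing R]

/-- The length of an `R`-module `M`: the Krull dimension of its lattice of submodules. -/
noncomputable def mlen (M : Type*) [AddCommGroup M] [Module R M] : WithBot ℕ∞ :=
  Order.krullDim (Submodule R M)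

/-- The minimal number of generators of an `R`-module. -/
noncomputable def mu (M : Type*) [AddCommGroup M] [Module R M] : ℕ :=
  sInf {n | ∃ s : Finset M, s.card = n ∧ Submodule.span R (s : Set M) = ⊤}

/-- The Hilbert–Samuel multiplicity `e_R(I, M)` of a finitely generated module over a
one-dimensional local ring with respect to an `m`-primary ideal `I`: the eventual value of
`ℓ(M/I^{n+1}M) - ℓ(M/I^n M)`. -/
noncomputable def hsMult (I : Ideal R) (M : Type*) [AddCommGroup M] [Module R M] : ℕ∞ := by
  classical
  exact if h : ∃ e : ℕ∞, ∀ᶠ n in atTop,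
      mlen R (M ⧸ (I ^ (n + 1) • (⊤ : Submodule R M))) =
        mlen R (M ⧸ (I ^ n • (⊤ : Submodule R M))) + (e : WithBot ℕ∞)
    then h.choose else 0

/-- The length of the subquotient `P/Q` for submodules `Q ⊆ P` of `M`. -/
noncomputable def qlen {M : Type*} [AddCommGroup M] [Module R M]
    (P Q : Submodule R M) : WithBot ℕ∞ :=
  mlen R (↥P ⧸ Q.comap P.subtype)

/-- `(x)` is a minimal reduction of `I` (one-dimensional situation): a principal subideal with
`I^{n+1} = x I^n` for all large `n`. -/
def IsMinimalReduction (I : Ideal R) (x : R) : Prop :=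
  x ∈ I ∧ ∃ N : ℕ, ∀ n ≥ N, I ^ (n + 1) = Ideal.span {x} * I ^ n

/-- A module is torsion-free if non zero-divisors of `R` act injectively. -/
def TorsionFree (M : Type*) [AddCommGroup M] [Module R M] : Prop :=
  ∀ r ∈ nonZeroDivisors R, ∀ m : M, r • m = 0 → m = 0

/-- The embedding dimension of a local ring: the minimal number of generators of the
maximal ideal. -/
noncomputable def embdim (R : Type*) [CommRing R] [IsLocalRing R] : ℕ :=
  sInf {n | ∃ s : Finset R, s.card = n ∧ Ideal.span (s : Set R) = maximalIdeal R}

/-- A Noetherian local ring is regular iff its embedding dimension equals its Krull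
dimension. -/
def IsRegularLocal (R : Type*) [CommRing R] [IsLocalRing R] : Prop :=
  ((embdim R : ℕ∞) : WithBot ℕ∞) = ringKrullDim R

/-- The colon `(J :_Q K)` of two `R`-submodules of an `R`-algebra `Q`. -/
def colonQ {Q : Type*} [CommRing Q] [Algebra R Q] (J K : Submodule R Q) : Submodule R Q where
  carrier := {q | ∀ k ∈ K, q * k ∈ J}
  add_mem' := by
    intro a b ha hb k hk
    simpa [add_mul] using J.add_mem (ha k hk) (hb k hk)
  zero_mem' := by intro k hk; rw [zero_mul]; exact J.zero_mem
  smul_mem' := by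
    intro c a ha k hk
    simpa [smul_mul_assoc] using J.smul_mem c (ha k hk)

end Defs

/-!
Since `x` is a nonzerodivisor on the torsion-free module `M` (the ring has a nonzerodivisor in
`m` and `(x)` is `m`-primary), multiplication by `x` gives exact sequences
`0 → M/S → M/xS → M/xM → 0` for all submodules `S`. With `I^{n+1}M = x I^n M` for large `n`
this makes the Hilbert–Samuel differences eventually equal to `ℓ(M/xM)`, so
`e(I, M) = ℓ(M/xM) = ℓ(M/IM) + ℓ(IM/xM)`, and the Ulrich condition says exactly that `IM/xM`
vanishes.
-/

open Pointwise Submodule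

section Length

variable {R : Type*} [CommRing R] {M : Type*} [AddCommGroup M] [Module R M]

lemma mlen_eq_length : mlen R M = Module.length R M :=
  (Module.coe_length R M).symm

lemma length_quotient_eq_add_of_le {S T : Submodule R M} (h : S ≤ T) :
    Module.length R (M ⧸ S) = Module.length R (M ⧸ T) + Module.length R (T.map S.mkQ) := by
  rw [add_comm]
  exact Module.length_eq_add_of_exact _ (factor h) (injective_subtype _) (factor_surjective h) (by
    rw [LinearMap.exact_iff, ker_mapQ, range_subtype]; simp)

lemma length_quotient_eq_iff_of_le {S T : Submodule R M} (h : S ≤ T)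
    (hT : Module.length R (M ⧸ T) ≠ ⊤) :
    Module.length R (M ⧸ S) = Module.length R (M ⧸ T) ↔ T = S := by
  conv_lhs => rw [length_quotient_eq_add_of_le h, ← add_zero (Module.length R (M ⧸ T)), add_assoc,
    zero_add, (ENat.add_right_injective_of_ne_top hT).eq_iff, Module.length_eq_zero_iff,
    subsingleton_iff_eq_bot, ← le_bot_iff, Submodule.map_le_iff_le_comap, Submodule.comap_bot,
    ker_mkQ]
  exact ⟨fun hTS => le_antisymm hTS h, le_of_eq⟩

lemma length_quotient_smul_eq_add {x : R} (hx : IsSMulRegular M x) (S : Submodule R M) :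
    Module.length R (M ⧸ x • S) =
      Module.length R (M ⧸ S) + Module.length R (M ⧸ x • (⊤ : Submodule R M)) := by
  set f : M →ₗ[R] M := DistribSMul.toLinearMap R M x
  have hf : Function.Injective f := hx
  have hfS : ∀ T : Submodule R M, x • T = T.map f := fun _ => rfl
  have hS : S ≤ (x • S).comap f := Submodule.map_le_iff_le_comap.mp le_rfl
  refine Module.length_eq_add_of_exact (S.mapQ _ f hS) (factor (smul_mono_right x le_top))
    ?_ (factor_surjective _) ?_
  · rw [← LinearMap.ker_eq_bot, ker_mapQ, hfS, comap_map_eq_of_injective hf, mkQ_map_self]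
  · rw [LinearMap.exact_iff, ker_mapQ, range_mapQ, LinearMap.range_eq_map, ← hfS]
    rfl

lemma hsMult_eq_of_eventually_eq_add {I : Ideal R} {e : ℕ∞}
    (h : ∀ᶠ n in atTop, Module.length R (M ⧸ I ^ n • (⊤ : Submodule R M)) ≠ ⊤ ∧
      Module.length R (M ⧸ I ^ (n + 1) • (⊤ : Submodule R M)) =
        Module.length R (M ⧸ I ^ n • (⊤ : Submodule R M)) + e) :
    hsMult R I M = e := by
  have hex : ∃ e' : ℕ∞, ∀ᶠ n in atTop, mlen R (M ⧸ I ^ (n + 1) • (⊤ : Submodule R M)) =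
      mlen R (M ⧸ I ^ n • (⊤ : Submodule R M)) + (e' : WithBot ℕ∞) :=
    ⟨e, h.mono fun _ hn => by rw [mlen_eq_length, mlen_eq_length, hn.2, WithBot.coe_add]⟩
  rw [hsMult, dif_pos hex]
  obtain ⟨n, hchoose, hfin, hn⟩ := (hex.choose_spec.and h).exists
  rw [mlen_eq_length, mlen_eq_length, hn, ← WithBot.coe_add, WithBot.coe_inj] at hchoose
  exact (ENat.add_right_injective_of_ne_top hfin hchoose).symm

end Length

section LocalRing

variable {R : Type*} [CommRing R]

lemma mem_nonZeroDivisors_of_mem_radical_span_singleton {x r : R} (hr : r ∈ nonZeroDivisors R)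
    (h : r ∈ (Ideal.span {x}).radical) : x ∈ nonZeroDivisors R := by
  obtain ⟨k, hk⟩ := h
  obtain ⟨c, hc⟩ := Ideal.mem_span_singleton'.mp hk
  exact (mul_mem_nonZeroDivisors.mp (hc ▸ pow_mem hr k)).2

lemma IsMinimalReduction.radical_span_singleton {I : Ideal R} {x : R}
    (hx : IsMinimalReduction R I x) : (Ideal.span {x}).radical = I.radical := by
  obtain ⟨hxI, N, hN⟩ := hx
  refine le_antisymm (Ideal.radical_mono ((Ideal.span_singleton_le_iff_mem I).mpr hxI)) ?_
  rw [← Ideal.radical_pow I N.succ_ne_zero, hN N le_rfl]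
  exact Ideal.radical_mono Ideal.mul_le_left

lemma length_quotient_smul_top_ne_top [IsLocalRing R] [IsNoetherianRing R] {M : Type*}
    [AddCommGroup M] [Module R M] [Module.Finite R M] {J : Ideal R}
    (hJ : J.radical = maximalIdeal R) : Module.length R (M ⧸ J • (⊤ : Submodule R M)) ≠ ⊤ := by
  have : IsArtinianRing (R ⧸ J) := quotient_artinian_of_mem_minimalPrimes_of_isLocalRing J (by
    rw [← Ideal.radical_minimalPrimes, hJ, Ideal.minimalPrimes_eq_subsingleton_self]; rfl)
  have : IsArtinian R (M ⧸ J • (⊤ : Submodule R M)) :=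
    isArtinian_of_surjective_algebraMap (S := R) (R := R ⧸ J) Ideal.Quotient.mk_surjective
  exact Module.length_ne_top

end LocalRing

theorem stmt2_general (R : Type*) [CommRing R] [IsLocalRing R] [IsNoetherianRing R]
    (hCM : ∃ r ∈ maximalIdeal R, r ∈ nonZeroDivisors R)
    (I : Ideal R) (hI : I.radical = maximalIdeal R)
    (M : Type*) [AddCommGroup M] [Module R M] [Module.Finite R M]
    (hTF : TorsionFree R M)
    (x : R) (hx : IsMinimalReduction R I x) :
    ((hsMult R I M : ℕ∞) : WithBot ℕ∞) = mlen R (M ⧸ (I • (⊤ : Submodule R M))) ↔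
      I • (⊤ : Submodule R M) = Ideal.span {x} • (⊤ : Submodule R M) := by
  obtain ⟨r, hrm, hr⟩ := hCM
  have hxrad : (Ideal.span {x}).radical = maximalIdeal R := hx.radical_span_singleton.trans hI
  have hxM : IsSMulRegular M x :=
    isSMulRegular_iff_right_eq_zero_of_smul.mpr <|
      hTF x (mem_nonZeroDivisors_of_mem_radical_span_singleton hr (hxrad ▸ hrm))
  obtain ⟨hxI, N, hN⟩ := hx
  have hxMIM : x • (⊤ : Submodule R M) ≤ I • ⊤ := by
    rw [← ideal_span_singleton_smul]
    exact smul_mono_left ((Ideal.span_singleton_le_iff_mem I).mpr hxI)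
  have hmult : hsMult R I M = Module.length R (M ⧸ x • (⊤ : Submodule R M)) := by
    refine hsMult_eq_of_eventually_eq_add (eventually_atTop.mpr ⟨N + 1, fun n hn => ⟨?_, ?_⟩⟩)
    · exact length_quotient_smul_top_ne_top (by rw [Ideal.radical_pow I (by omega), hI])
    · rw [hN n (by omega), mul_smul, ideal_span_singleton_smul]
      exact length_quotient_smul_eq_add hxM _
  rw [hmult, mlen_eq_length, WithBot.coe_inj, ideal_span_singleton_smul]
  exact length_quotient_eq_iff_of_le hxMIM (length_quotient_smul_top_ne_top hI)

/-- `M` is `I`-Ulrich (`e_R(I,M) = ℓ_R(M/IM)`) iff `IM = xM`, for a minimal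
reduction `(x)` of `I`. -/
theorem stmt2 (R : Type*) [CommRing R] [IsLocalRing R] [IsNoetherianRing R]
    (hdim : ringKrullDim R = 1)
    (hCM : ∃ r ∈ maximalIdeal R, r ∈ nonZeroDivisors R)
    (I : Ideal R) (hI : I.radical = maximalIdeal R)
    (M : Type*) [AddCommGroup M] [Module R M] [Module.Finite R M]
    (hTF : TorsionFree R M)
    (x : R) (hx : IsMinimalReduction R I x) :
    ((hsMult R I M : ℕ∞) : WithBot ℕ∞) = mlen R (M ⧸ (I • (⊤ : Submodule R M))) ↔
      I • (⊤ : Submodule R M) = Ideal.span {x} • (⊤ : Submodule R M) :=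
  stmt2_general R hCM I hI M hTF x hx
end

section
/- Let R be a one-dimensional Cohen-Macaulay local ring, I a non-principal m-primary ideal, (x) a minimal reduction of I, and r = min{n ≥ 0 : I^{n+1} = x I^n}. Then for every finitely generated torsion-free R-module M, the module I^{r-1} M has minimal multiplicity with respect to I, but the ideal I^{r-1} is not an I-Ulrich R-module. -/
/-!
With `r` the least `n` such that `I^{n+1} = x I^n` (it exists because `(x)` is a reduction of `I`),
`r ≥ 1` as `I` is not principal. Then `I^2 I^{r-1} M = I^{r+1} M = x I^r M = x I I^{r-1} M`, while
`I I^{r-1} = x I^{r-1}` would say that `r - 1` already has the defining property of `r`.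
-/

open IsLocalRing Filter

theorem Submodule.pow_two_smul_pow_smul_eq_of_pow_succ_eq {R M : Type*} [CommRing R]
    [AddCommGroup M] [Module R M] {I J : Ideal R} {k : ℕ}
    (h : I ^ (k + 2) = J * I ^ (k + 1)) (N : Submodule R M) :
    I ^ 2 • (I ^ k • N) = J • (I • (I ^ k • N)) := by
  rw [← Submodule.mul_smul, ← Submodule.mul_smul, ← Submodule.mul_smul, ← pow_add, mul_assoc,
    ← pow_succ', add_comm, h]

universe u

theorem stmt6_general (R : Type*) [CommRing R]
    (I : Ideal R)
    (hnp : ¬ ∃ a : R, I = Ideal.span {a})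
    (x : R) (hx : IsMinimalReduction R I x)
    (r : ℕ) (hr : r = sInf {n : ℕ | I ^ (n + 1) = Ideal.span {x} * I ^ n}) :
    (∀ (M : Type u) [AddCommGroup M] [Module R M] [Module.Finite R M],
        TorsionFree R M →
        I ^ 2 • (I ^ (r - 1) • (⊤ : Submodule R M)) =
          Ideal.span {x} • (I • (I ^ (r - 1) • (⊤ : Submodule R M)))) ∧
      I * I ^ (r - 1) ≠ Ideal.span {x} * I ^ (r - 1) := by
  have hr_mem : I ^ (r + 1) = Ideal.span {x} * I ^ r := by
    obtain ⟨-, N, hN⟩ := hx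
    rw [hr]
    exact Nat.sInf_mem (s := {n | I ^ (n + 1) = Ideal.span {x} * I ^ n}) ⟨N, hN N le_rfl⟩
  have hr_pos : 1 ≤ r := Nat.one_le_iff_ne_zero.mpr fun h0 => hnp ⟨x, by simpa [h0] using hr_mem⟩
  have hr_succ : r - 1 + 1 = r := Nat.sub_add_cancel hr_pos
  refine ⟨fun M _ _ _ _ => Submodule.pow_two_smul_pow_smul_eq_of_pow_succ_eq
    (by rwa [← hr_succ] at hr_mem) ⊤, fun hUlrich => ?_⟩
  have hr_pred : I ^ (r - 1 + 1) = Ideal.span {x} * I ^ (r - 1) := by rw [pow_succ', hUlrich]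
  exact Nat.notMem_of_lt_sInf ((Nat.sub_lt hr_pos one_pos).trans_eq hr) hr_pred

/-- for a non-principal `m`-primary ideal `I` with minimal reduction `(x)` and
`r = min{n ≥ 0 : I^{n+1} = xI^n}`, the module `I^{r-1}M` has minimal multiplicity with respect
to `I` for every f.g. torsion-free `M`, but the ideal `I^{r-1}` is not `I`-Ulrich. -/
theorem stmt6 (R : Type*) [CommRing R] [IsLocalRing R] [IsNoetherianRing R]
    (hdim : ringKrullDim R = 1)
    (hCM : ∃ r ∈ maximalIdeal R, r ∈ nonZeroDivisors R)
    (I : Ideal R) (hI : I.radical = maximalIdeal R)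
    (hnp : ¬ ∃ a : R, I = Ideal.span {a})
    (x : R) (hx : IsMinimalReduction R I x)
    (r : ℕ) (hr : r = sInf {n : ℕ | I ^ (n + 1) = Ideal.span {x} * I ^ n}) :
    (∀ (M : Type u) [AddCommGroup M] [Module R M] [Module.Finite R M],
        TorsionFree R M →
        I ^ 2 • (I ^ (r - 1) • (⊤ : Submodule R M)) =
          Ideal.span {x} • (I • (I ^ (r - 1) • (⊤ : Submodule R M)))) ∧
      I * I ^ (r - 1) ≠ Ideal.span {x} * I ^ (r - 1) :=
  stmt6_general R I hnp x hx r hr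
end

section
/- Let R be a one-dimensional Cohen-Macaulay local ring, I a fractional ideal of R with μ_R(I) = 2. Then Hom_R(I, R) is isomorphic to the first syzygy Ω_R(I) of I; equivalently, there is a short exact sequence 0 → Hom_R(I,R) → R^2 → I → 0. -/
open IsLocalRing Filter

/-!
Write `I = Ra + Rb`. Since every element of `Q` is a fraction, any `φ : I → R` satisfies
`φ(y) z = φ(z) y`, so `φ ↦ (φ b, -φ a)` lands in the syzygies of `(a, b)`; it is injective
because `a, b` generate `I`. Conversely, `I` is faithful, so the determinant `u w₁ - v w₀` of two
syzygies `(u, v)`, `(w₀, w₁)` vanishes (it kills both `a` and `b`). Hence `w ↦ w₁ u - w₀ v`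
vanishes on the syzygies, i.e. factors through `R² → I`, giving a `φ` with `(φ b, -φ a) = (u, v)`.
-/

section Pair

variable {R M : Type*} [CommRing R] [AddCommGroup M] [Module R M] {a b : M}

def dualToSyzygy (a b : M) : Module.Dual R M →ₗ[R] (Fin 2 → R) :=
  LinearMap.pi ![LinearMap.applyₗ b, -LinearMap.applyₗ a]

@[simp]
lemma dualToSyzygy_apply (φ : Module.Dual R M) : dualToSyzygy a b φ = ![φ b, -φ a] := by
  ext i
  fin_cases i <;> rfl

lemma linearCombination_pair_apply (w : Fin 2 → R) :
    Fintype.linearCombination R ![a, b] w = w 0 • a + w 1 • b := by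
  simp [Fintype.linearCombination_apply, Fin.sum_univ_two]

lemma surjective_linearCombination_pair (hab : Submodule.span R {a, b} = ⊤) :
    Function.Surjective (Fintype.linearCombination R ![a, b]) := by
  rwa [← span_range_eq_top_iff_surjective_fintypeLinearCombination, Matrix.range_cons_cons_empty]

lemma injective_dualToSyzygy (hab : Submodule.span R {a, b} = ⊤) :
    Function.Injective (dualToSyzygy a b : Module.Dual R M →ₗ[R] _) := by
  rw [← LinearMap.ker_eq_bot, Submodule.eq_bot_iff]
  intro φ hφ
  have hb : φ b = 0 := by simpa using congrFun hφ 0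
  have ha : φ a = 0 := by simpa using congrFun hφ 1
  refine LinearMap.ext_on hab ?_
  rintro x (rfl | rfl) <;> simp [ha, hb]

lemma range_dualToSyzygy_le_ker (hrank : ∀ φ : Module.Dual R M, φ b • a = φ a • b) :
    LinearMap.range (dualToSyzygy a b) ≤ LinearMap.ker (Fintype.linearCombination R ![a, b]) := by
  rintro _ ⟨φ, rfl⟩
  simp [linearCombination_pair_apply, hrank φ]

lemma syzygy_det_eq_zero [FaithfulSMul R M] (hab : Submodule.span R {a, b} = ⊤) {u v w₀ w₁ : R}
    (huv : u • a + v • b = 0) (hw : w₀ • a + w₁ • b = 0) : w₁ * u - w₀ * v = 0 := by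
  have hta : (w₁ * u - w₀ * v) • a = 0 := by
    linear_combination (norm := module) w₁ • huv - v • hw
  have htb : (w₁ * u - w₀ * v) • b = 0 := by
    linear_combination (norm := module) u • hw - w₀ • huv
  have hann : ∀ x : M, (w₁ * u - w₀ * v) • x = 0 := by
    intro x
    obtain ⟨r, s, rfl⟩ := Submodule.mem_span_pair.mp (hab ▸ Submodule.mem_top : x ∈ _)
    rw [smul_add, smul_comm _ r, smul_comm _ s, hta, htb, smul_zero, smul_zero, add_zero]
  exact eq_of_smul_eq_smul (α := M) fun x ↦ by rw [hann x, zero_smul]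

lemma ker_le_range_dualToSyzygy [FaithfulSMul R M] (hab : Submodule.span R {a, b} = ⊤) :
    LinearMap.ker (Fintype.linearCombination R ![a, b]) ≤ LinearMap.range (dualToSyzygy a b) := by
  intro v hv
  have hv' : v 0 • a + v 1 • b = 0 := by rwa [LinearMap.mem_ker, linearCombination_pair_apply] at hv
  have hψ : Fintype.linearCombination R ![-v 1, v 0] ∈
      (LinearMap.ker (Fintype.linearCombination R ![a, b])).dualAnnihilator := by
    rw [Submodule.mem_dualAnnihilator]
    intro w hw
    rw [LinearMap.mem_ker, linearCombination_pair_apply] at hw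
    rw [linearCombination_pair_apply, smul_eq_mul, smul_eq_mul]
    linear_combination syzygy_det_eq_zero hab hv' hw
  rw [← LinearMap.range_dualMap_eq_dualAnnihilator_ker_of_surjective _
    (surjective_linearCombination_pair hab)] at hψ
  obtain ⟨φ, hφ⟩ := hψ
  have hφw (w : Fin 2 → R) := LinearMap.congr_fun hφ w
  simp only [LinearMap.dualMap_apply, linearCombination_pair_apply] at hφw
  refine ⟨φ, ?_⟩
  ext i
  fin_cases i
  · simpa using hφw ![0, 1]
  · simpa [neg_eq_iff_eq_neg] using hφw ![1, 0]

end Pair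

section FractionalIdeal

variable {R Q : Type*} [CommRing R] [CommRing Q] [Algebra R Q]

-- Clearing denominators `y = r/s`, `z = r'/s'` gives `(r' s) y = (r s') z` inside `J`.
lemma Submodule.dual_apply_smul_comm (S : Submonoid R) [IsLocalization S Q] {J : Submodule R Q}
    (φ : Module.Dual R J) (y z : J) : φ y • z = φ z • y := by
  obtain ⟨⟨ry, sy⟩, hy⟩ := IsLocalization.surj S (y : Q)
  obtain ⟨⟨rz, sz⟩, hz⟩ := IsLocalization.surj S (z : Q)
  have hcross : (rz * sy) • y = (ry * sz) • z := by
    ext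
    simp only [SetLike.val_smul, Algebra.smul_def, map_mul]
    linear_combination (algebraMap R Q sz * z) * hy - (algebraMap R Q sy * y) * hz
  have hφ := congrArg (algebraMap R Q) (by simpa using congrArg φ hcross)
  simp only [map_mul] at hφ
  ext
  apply ((IsLocalization.map_units Q sy).mul (IsLocalization.map_units Q sz)).mul_left_cancel
  simp only [SetLike.val_smul, Algebra.smul_def]
  linear_combination hφ + (algebraMap R Q sy * algebraMap R Q (φ y)) * hz -
    (algebraMap R Q sz * algebraMap R Q (φ z)) * hy

lemma Submodule.faithfulSMul_of_isUnit_mem [FaithfulSMul R Q] {J : Submodule R Q} {q : Q}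
    (hq : IsUnit q) (hqJ : q ∈ J) : FaithfulSMul R J := by
  refine (Module.annihilator_eq_bot (R := R) (M := J)).mp <|
    (Submodule.eq_bot_iff _).mpr fun r hr ↦ ?_
  have hrq : algebraMap R Q r * q = 0 := by
    simpa [Algebra.smul_def] using congrArg Subtype.val (Module.mem_annihilator.mp hr ⟨q, hqJ⟩)
  exact FaithfulSMul.algebraMap_injective R Q (by simpa using hq.mul_left_eq_zero.mp hrq)

end FractionalIdeal

lemma exists_span_pair_eq_top_of_mu_eq_two {R M : Type*} [CommRing R] [AddCommGroup M]
    [Module R M] (hmu : mu R M = 2) : ∃ a b : M, Submodule.span R {a, b} = ⊤ := by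
  classical
  unfold mu at hmu
  obtain ⟨s, hcard, hspan⟩ := hmu ▸ Nat.sInf_mem (Nat.nonempty_of_pos_sInf (hmu ▸ two_pos))
  obtain ⟨a, b, -, rfl⟩ := Finset.card_eq_two.mp hcard
  exact ⟨a, b, by simpa using hspan⟩

theorem stmt10_general (R : Type*) [CommRing R]
    (J : Submodule R (FractionRing R))
    (hnzd : ∃ r ∈ nonZeroDivisors R, algebraMap R (FractionRing R) r ∈ J)
    (hmu : mu R ↥J = 2) :
    ∃ (f : (↥J →ₗ[R] R) →ₗ[R] (Fin 2 → R)) (g : (Fin 2 → R) →ₗ[R] ↥J),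
      Function.Injective f ∧ Function.Surjective g ∧ LinearMap.range f = LinearMap.ker g := by
  obtain ⟨a, b, hab⟩ := exists_span_pair_eq_top_of_mu_eq_two hmu
  obtain ⟨c, hc, hcJ⟩ := hnzd
  have : FaithfulSMul R J :=
    Submodule.faithfulSMul_of_isUnit_mem (IsLocalization.map_units _ ⟨c, hc⟩) hcJ
  refine ⟨dualToSyzygy a b, Fintype.linearCombination R ![a, b], injective_dualToSyzygy hab,
    surjective_linearCombination_pair hab, le_antisymm ?_ (ker_le_range_dualToSyzygy hab)⟩
  exact range_dualToSyzygy_le_ker fun φ ↦ J.dual_apply_smul_comm (nonZeroDivisors R) φ b a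

/-- for a two-generated fractional ideal `I` of a one-dimensional CM local ring,
there is a short exact sequence `0 → Hom_R(I,R) → R² → I → 0`, so `Hom_R(I,R) ≅ Ω_R(I)`. -/
theorem stmt10 (R : Type*) [CommRing R] [IsLocalRing R] [IsNoetherianRing R]
    (hdim : ringKrullDim R = 1)
    (hCM : ∃ r ∈ maximalIdeal R, r ∈ nonZeroDivisors R)
    (J : Submodule R (FractionRing R)) (hfg : J.FG)
    (hnzd : ∃ r ∈ nonZeroDivisors R, algebraMap R (FractionRing R) r ∈ J)
    (hmu : mu R ↥J = 2) :
    ∃ (f : (↥J →ₗ[R] R) →ₗ[R] (Fin 2 → R)) (g : (Fin 2 → R) →ₗ[R] ↥J),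
      Function.Injective f ∧ Function.Surjective g ∧ LinearMap.range f = LinearMap.ker g :=
  stmt10_general R J hnzd hmu
end

section
/- Let R be a one-dimensional Cohen-Macaulay local ring, I an m-primary ideal, and M a finitely generated torsion-free R-module having minimal multiplicity with respect to I. Then for every finitely generated torsion-free R-module N, the module Hom_R(IM, N) is I-Ulrich. -/
open IsLocalRing Filter

universe u

open Pointwise

/-!
Since `I²M = x·IM`, the module `T = IM` satisfies `I·T = x·T`, and `x` is a nonzerodivisor because
`(x) ⊇ I^{n+1}` contains a power of a nonzerodivisor of `m = √I`. As `T` is torsion-free, every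
`a ∈ I` then acts on `T` as `x` times an endomorphism `a/x`, so `a·f = x·(f ∘ a/x)` for every
`f : T → N`, i.e. `I·Hom(T, N) = x·Hom(T, N)`.
-/

section

variable {R : Type*} [CommRing R]

theorem IsMinimalReduction.mem_nonZeroDivisors {I : Ideal R} {x r : R}
    (hx : IsMinimalReduction R I x) (hrI : r ∈ I.radical) (hr : r ∈ nonZeroDivisors R) :
    x ∈ nonZeroDivisors R := by
  obtain ⟨k, hk⟩ := hrI
  obtain ⟨n, hn⟩ := hx.2
  have hpow : (r ^ k) ^ (n + 1) ∈ Ideal.span {x} * I ^ n := by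
    rw [← hn n le_rfl]
    exact Ideal.pow_mem_pow hk _
  obtain ⟨c, hc⟩ := Ideal.mem_span_singleton.mp (Ideal.mul_le_left hpow)
  have hrk : (r ^ k) ^ (n + 1) ∈ nonZeroDivisors R := pow_mem (pow_mem hr k) _
  rw [hc] at hrk
  exact (mul_mem_nonZeroDivisors.mp hrk).1

theorem TorsionFree.isSMulRegular {M : Type*} [AddCommGroup M] [Module R M]
    (hM : TorsionFree R M) {x : R} (hx : x ∈ nonZeroDivisors R) : IsSMulRegular M x :=
  fun u v huv => sub_eq_zero.mp (hM x hx _ (by rw [smul_sub]; exact sub_eq_zero.mpr huv))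

theorem Submodule.smul_top_eq_smul_top_iff {M : Type*} [AddCommGroup M] [Module R M]
    (T : Submodule R M) (J K : Ideal R) :
    J • (⊤ : Submodule R T) = K • ⊤ ↔ J • T = K • T := by
  rw [← (Submodule.map_injective_of_injective T.injective_subtype).eq_iff,
    Submodule.map_smul'', Submodule.map_smul'', Submodule.map_subtype_top]

section

variable {T : Type*} [AddCommGroup T] [Module R T]

theorem exists_linearMap_smul_eq_smul {x a : R} (hx : IsSMulRegular T x)
    (ha : ∀ t : T, ∃ s, x • s = a • t) : ∃ c : T →ₗ[R] T, ∀ t, x • c t = a • t := by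
  let mulX : T ≃ₗ[R] LinearMap.range (LinearMap.lsmul R T x) := LinearEquiv.ofInjective _ hx
  let mulA : T →ₗ[R] LinearMap.range (LinearMap.lsmul R T x) :=
    (LinearMap.lsmul R T a).codRestrict _ ha
  refine ⟨mulX.symm.toLinearMap ∘ₗ mulA, fun t => ?_⟩
  exact congrArg Subtype.val (mulX.apply_symm_apply (mulA t))

theorem ideal_smul_top_linearMap_eq {I : Ideal R} {x : R} (hx : IsSMulRegular T x)
    (hxI : x ∈ I) (hIT : I • (⊤ : Submodule R T) ≤ Ideal.span {x} • ⊤)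
    (N : Type*) [AddCommGroup N] [Module R N] :
    I • (⊤ : Submodule R (T →ₗ[R] N)) = Ideal.span {x} • ⊤ := by
  refine le_antisymm (Submodule.smul_le.mpr fun a ha f _ => ?_)
    (Submodule.smul_mono_left ((Ideal.span_singleton_le_iff_mem I).mpr hxI))
  have hdiv : ∀ t : T, ∃ s, x • s = a • t := fun t => by
    have := hIT (Submodule.smul_mem_smul ha (Submodule.mem_top (x := t)))
    rw [Submodule.ideal_span_singleton_smul, Submodule.mem_smul_pointwise_iff_exists] at this
    obtain ⟨s, -, hs⟩ := this
    exact ⟨s, hs⟩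
  obtain ⟨c, hc⟩ := exists_linearMap_smul_eq_smul hx hdiv
  have hf : a • f = x • (f ∘ₗ c) := by
    ext t
    rw [LinearMap.smul_apply, LinearMap.smul_apply, LinearMap.comp_apply, ← map_smul, ← map_smul,
      hc]
  rw [hf]
  exact Submodule.smul_mem_smul (Ideal.mem_span_singleton_self x) Submodule.mem_top

end

end

theorem stmt15_general (R : Type*) [CommRing R] [IsLocalRing R]
    (hCM : ∃ r ∈ maximalIdeal R, r ∈ nonZeroDivisors R)
    (I : Ideal R) (hI : I.radical = maximalIdeal R)
    (M : Type*) [AddCommGroup M] [Module R M] (hTF : TorsionFree R M)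
    (hmm : ∃ x : R, IsMinimalReduction R I x ∧
      I ^ 2 • (⊤ : Submodule R M) = Ideal.span {x} • (I • (⊤ : Submodule R M))) :
    ∀ (N : Type u) [AddCommGroup N] [Module R N] [Module.Finite R N],
      TorsionFree R N →
      ∃ y : R, IsMinimalReduction R I y ∧
        I • (⊤ : Submodule R (↥(I • (⊤ : Submodule R M)) →ₗ[R] N)) =
          Ideal.span {y} • (⊤ : Submodule R (↥(I • (⊤ : Submodule R M)) →ₗ[R] N)) := by
  intro N _ _ _ _
  obtain ⟨x, hxred, hxM⟩ := hmm
  obtain ⟨r, hrm, hr⟩ := hCM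
  have hx : x ∈ nonZeroDivisors R := hxred.mem_nonZeroDivisors (hI ▸ hrm) hr
  have hIT : I • (⊤ : Submodule R ↥(I • (⊤ : Submodule R M))) =
      Ideal.span {x} • (⊤ : Submodule R ↥(I • (⊤ : Submodule R M))) := by
    rw [Submodule.smul_top_eq_smul_top_iff, ← hxM, pow_two, ← Ideal.smul_eq_mul,
      Submodule.smul_assoc]
  exact ⟨x, hxred, ideal_smul_top_linearMap_eq ((hTF.isSMulRegular hx).submodule _ x)
    hxred.1 hIT.le N⟩

/-- if `M` has minimal multiplicity with respect to `I`, then `Hom_R(IM, N)` is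
`I`-Ulrich for every f.g. torsion-free `R`-module `N`. -/
theorem stmt15 (R : Type*) [CommRing R] [IsLocalRing R] [IsNoetherianRing R]
    [Infinite (ResidueField R)]
    (hdim : ringKrullDim R = 1)
    (hCM : ∃ r ∈ maximalIdeal R, r ∈ nonZeroDivisors R)
    (I : Ideal R) (hI : I.radical = maximalIdeal R)
    (M : Type*) [AddCommGroup M] [Module R M] [Module.Finite R M] (hTF : TorsionFree R M)
    (hmm : ∃ x : R, IsMinimalReduction R I x ∧
      I ^ 2 • (⊤ : Submodule R M) = Ideal.span {x} • (I • (⊤ : Submodule R M))) :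
    ∀ (N : Type u) [AddCommGroup N] [Module R N] [Module.Finite R N],
      TorsionFree R N →
      ∃ y : R, IsMinimalReduction R I y ∧
        I • (⊤ : Submodule R (↥(I • (⊤ : Submodule R M)) →ₗ[R] N)) =
          Ideal.span {y} • (⊤ : Submodule R (↥(I • (⊤ : Submodule R M)) →ₗ[R] N)) :=
  stmt15_general R hCM I hI M hTF hmm
end

section
/- Let R be a one-dimensional Cohen-Macaulay local ring with total ring of fractions Q, I an m-primary ideal that is reflexive (i.e., (R :_Q (R :_Q I)) = I), and x ∈ I a non zero-divisor. If x(R :_Q I) = I(R :_Q I), then I = x(I :_Q I), and hence I^2 = xI (I is stable). -/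
open IsLocalRing Filter

/-!
Write `I` also for the extension of `I` to `Q`, `Iᵛ = (R :_Q I)` and `E = (I :_Q I)`. For `a ∈ I`
put `q = a / x`. If `b ∈ I` and `j ∈ Iᵛ`, then `b j ∈ I Iᵛ = x Iᵛ`, say `b j = x j'`, so
`q b j = a j' ∈ R`; hence `q b ∈ (R :_Q Iᵛ) = I`, i.e. `q ∈ E` and `a = x q ∈ x E`.
Then `I² = x E I = x I` because `E I = I`.
-/

open Submodule

section Colon

variable {R Q : Type*} [CommRing R] [CommRing Q] [Algebra R Q]

theorem one_mem_colonQ_self (I : Submodule R Q) : (1 : Q) ∈ colonQ R I I :=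
  fun k hk => by rwa [one_mul]

theorem colonQ_self_mul (I : Submodule R Q) : colonQ R I I * I = I :=
  le_antisymm (mul_le.mpr fun e he b hb => he b hb)
    fun a ha => by simpa using mul_mem_mul (one_mem_colonQ_self I) ha

theorem eq_span_singleton_mul_colonQ_self {I : Submodule R Q} {y : Q}
    (hrefl : colonQ R 1 (colonQ R 1 I) ≤ I) (hyI : y ∈ I) (hy : IsUnit y)
    (h : span R {y} * colonQ R 1 I = I * colonQ R 1 I) :
    I = span R {y} * colonQ R I I := by
  refine le_antisymm (fun a ha => ?_) (mul_le.mpr fun r hr e he => ?_)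
  · obtain ⟨u, rfl⟩ := hy
    have hq : ↑u⁻¹ * a ∈ colonQ R I I := fun b hb => hrefl fun j hj => by
      obtain ⟨j', hj', hbj⟩ := mem_span_singleton_mul.mp
        (h ▸ mul_mem_mul hb hj : b * j ∈ span R {(u : Q)} * colonQ R 1 I)
      have : ↑u⁻¹ * a * b * j = j' * a := by
        rw [mul_assoc _ b, ← hbj]
        calc ↑u⁻¹ * a * (↑u * j') = (↑u⁻¹ * ↑u) * (j' * a) := by ring
          _ = j' * a := by rw [Units.inv_mul, one_mul]
      exact this ▸ hj' a ha
    simpa using mul_mem_mul (mem_span_singleton_self (u : Q)) hq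
  · obtain ⟨r, rfl⟩ := mem_span_singleton.mp hr
    rw [smul_mul_assoc, mul_comm]
    exact smul_mem _ _ (he y hyI)

theorem mul_self_eq_span_singleton_mul {I : Submodule R Q} {y : Q}
    (hI : I = span R {y} * colonQ R I I) : I * I = span R {y} * I := by
  nth_rewrite 1 [hI]
  rw [mul_assoc, colonQ_self_mul]

end Colon

theorem Ideal.sq_eq_span_singleton_mul_of_map {R Q : Type*} [CommRing R] [CommRing Q]
    [Algebra R Q] (hinj : Function.Injective (algebraMap R Q)) {I : Ideal R} {x : R}
    (h : Submodule.map (Algebra.linearMap R Q) I * Submodule.map (Algebra.linearMap R Q) I =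
      Submodule.span R {algebraMap R Q x} * Submodule.map (Algebra.linearMap R Q) I) :
    I ^ 2 = Ideal.span {x} * I := by
  apply Submodule.map_injective_of_injective (f := Algebra.linearMap R Q) hinj
  have hmap (A B : Ideal R) : Submodule.map (Algebra.linearMap R Q) (A * B) =
      Submodule.map (Algebra.linearMap R Q) A * Submodule.map (Algebra.linearMap R Q) B :=
    Submodule.map_mul A B (Algebra.ofId R Q)
  rw [pow_two, hmap, hmap, Ideal.span, Submodule.map_span, Set.image_singleton]
  exact h

theorem stmt17_general (R : Type*) [CommRing R]
    (I : Ideal R)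
    (hrefl :
      colonQ R (1 : Submodule R (FractionRing R))
          (colonQ R (1 : Submodule R (FractionRing R))
            (Submodule.map (Algebra.linearMap R (FractionRing R)) I)) =
        Submodule.map (Algebra.linearMap R (FractionRing R)) I)
    (x : R) (hxI : x ∈ I) (hx : x ∈ nonZeroDivisors R)
    (h : Submodule.span R {algebraMap R (FractionRing R) x} *
          colonQ R (1 : Submodule R (FractionRing R))
            (Submodule.map (Algebra.linearMap R (FractionRing R)) I) =
        Submodule.map (Algebra.linearMap R (FractionRing R)) I *
          colonQ R (1 : Submodule R (FractionRing R))
            (Submodule.map (Algebra.linearMap R (FractionRing R)) I)) :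
    Submodule.map (Algebra.linearMap R (FractionRing R)) I =
        Submodule.span R {algebraMap R (FractionRing R) x} *
          colonQ R (Submodule.map (Algebra.linearMap R (FractionRing R)) I)
            (Submodule.map (Algebra.linearMap R (FractionRing R)) I) ∧
      I ^ 2 = Ideal.span {x} * I := by
  have hI : _ = _ := eq_span_singleton_mul_colonQ_self hrefl.le (mem_map_of_mem hxI)
    (IsLocalization.map_units (FractionRing R) ⟨x, hx⟩) h
  exact ⟨hI, Ideal.sq_eq_span_singleton_mul_of_map (IsFractionRing.injective R (FractionRing R))
    (mul_self_eq_span_singleton_mul hI)⟩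

/-- if `I` is a reflexive `m`-primary ideal (`(R :_Q (R :_Q I)) = I`), `x ∈ I` a
non zero-divisor, and `x(R :_Q I) = I(R :_Q I)`, then `I = x(I :_Q I)` and hence `I² = xI`. -/
theorem stmt17 (R : Type*) [CommRing R] [IsLocalRing R] [IsNoetherianRing R]
    (hdim : ringKrullDim R = 1)
    (hCM : ∃ r ∈ maximalIdeal R, r ∈ nonZeroDivisors R)
    (I : Ideal R) (hI : I.radical = maximalIdeal R)
    (hrefl :
      colonQ R (1 : Submodule R (FractionRing R))
          (colonQ R (1 : Submodule R (FractionRing R))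
            (Submodule.map (Algebra.linearMap R (FractionRing R)) I)) =
        Submodule.map (Algebra.linearMap R (FractionRing R)) I)
    (x : R) (hxI : x ∈ I) (hx : x ∈ nonZeroDivisors R)
    (h : Submodule.span R {algebraMap R (FractionRing R) x} *
          colonQ R (1 : Submodule R (FractionRing R))
            (Submodule.map (Algebra.linearMap R (FractionRing R)) I) =
        Submodule.map (Algebra.linearMap R (FractionRing R)) I *
          colonQ R (1 : Submodule R (FractionRing R))
            (Submodule.map (Algebra.linearMap R (FractionRing R)) I)) :
    Submodule.map (Algebra.linearMap R (FractionRing R)) I =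
        Submodule.span R {algebraMap R (FractionRing R) x} *
          colonQ R (Submodule.map (Algebra.linearMap R (FractionRing R)) I)
            (Submodule.map (Algebra.linearMap R (FractionRing R)) I) ∧
      I ^ 2 = Ideal.span {x} * I :=
  stmt17_general R I hrefl x hxI hx h
end
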